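/- For n ≥ 3, the large rank of the multiplicative semigroup A^+(B_n) equals (n!)·n² + n⁴ + 2; equivalently, the set V = {ξ_{(i,j)} : i, j ∈ [n]} of nonzero constant maps is a prime subset of A^+(B_n) of minimum cardinality n², and |A^+(B_n)| = (n!+1)n² + n⁴ + 1. -/

import Mathlib

def Bn (n : ℕ) : Type := Option (Fin n × Fin n)

def Bn.mul {n : ℕ} : Bn n → Bn n → Bn n
  | some (i, j), some (k, l) => if j = k then some (i, l) else none
  | _, _ => none

instance (n : ℕ) : Mul (Bn n) := ⟨Bn.mul⟩

instance (n : ℕ) : Semigroup (Bn n) where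
  mul_assoc a b c := by
    show Bn.mul (Bn.mul a b) c = Bn.mul a (Bn.mul b c)
    change Option (Fin n × Fin n) at a b c
    rcases a with _ | ⟨i, j⟩ <;> rcases b with _ | ⟨k, l⟩ <;> try rfl
    by_cases h1 : j = k
    · have e1 : Bn.mul (some (i, j)) (some (k, l)) = (some (i, l) : Bn n) := if_pos h1
      rw [e1]
      rcases c with _ | ⟨p, q⟩
      · rfl
      by_cases h2 : l = p
      · have e2 : Bn.mul (some (k, l)) (some (p, q)) = (some (k, q) : Bn n) := if_pos h2
        rw [e2]
        exact (if_pos h2).trans (if_pos h1).symm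
      · have e2 : Bn.mul (some (k, l)) (some (p, q)) = (none : Bn n) := if_neg h2
        rw [e2]
        exact if_neg h2
    · have e1 : Bn.mul (some (i, j)) (some (k, l)) = (none : Bn n) := if_neg h1
      rw [e1]
      rcases c with _ | ⟨p, q⟩
      · rfl
      by_cases h2 : l = p
      · have e2 : Bn.mul (some (k, l)) (some (p, q)) = (some (k, q) : Bn n) := if_pos h2
        rw [e2]
        exact (if_neg h1).symm
      · have e2 : Bn.mul (some (k, l)) (some (p, q)) = (none : Bn n) := if_neg h2
        rw [e2]
        rfl

/-- Maps on `Bn n`, composed left-to-right: `x (f * g) = (x f) g`. -/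
def MapBn (n : ℕ) : Type := Bn n → Bn n

instance (n : ℕ) : Monoid (MapBn n) where
  mul f g := fun x => g (f x)
  one := fun x => x
  mul_assoc _ _ _ := rfl
  one_mul _ := rfl
  mul_one _ := rfl

/-- The constant map `ξ_c`. -/
def constMap (n : ℕ) (c : Bn n) : MapBn n := fun _ => c

/-- The `n`-support map `(p, q; σ)`, sending `(i, p) ↦ (iσ, q)` and all else to `θ`. -/
def nSuppMap (n : ℕ) (p q : Fin n) (σ : Equiv.Perm (Fin n)) : MapBn n :=
  fun x =>
    match x with
    | some (i, j) => if j = p then some (σ i, q) else none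
    | none => none

instance (n : ℕ) : DecidableEq (Bn n) :=
  inferInstanceAs (DecidableEq (Option (Fin n × Fin n)))

/-- The singleton-support map `((k,l) → (p,q))`. -/
def sglMap (n : ℕ) (k l p q : Fin n) : MapBn n :=
  fun x => @ite _ (x = some (k, l)) (instDecidableEqBn n x (some (k, l))) (some (p, q)) none

/-- The multiplicative semigroup reduct `A⁺(Bₙ)`, as a set of maps on `Bn n`. -/
def APlus (n : ℕ) : Set (MapBn n) :=
  {f | (∃ c, f = constMap n c) ∨ (∃ p q σ, f = nSuppMap n p q σ) ∨
       (∃ k l p q, f = sglMap n k l p q)}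

/-- Independence of a subset of a semigroup. -/
def IndependentIn {S : Type*} [Semigroup S] (U : Set S) : Prop :=
  ∀ a ∈ U, a ∉ Subsemigroup.closure (U \ {a})

/-!
A subset `U` of the finite semigroup `A⁺(Bₙ)` fails to generate it exactly when it avoids the
nonempty prime set `A⁺(Bₙ) \ ⟨U⟩`, so the large rank is `|A⁺(Bₙ)| - m + 1`, where `m` is the least
size of a nonempty prime subset. Non-constant elements fix `θ`, so the `n²` nonzero constants form a
prime subset. Conversely, every element `w` has at least `n²` factorizations `w = a b` whose factors
are pairwise distinct (for an `n`-support map there are `(n - 1) n! ≥ n²` of them, which needs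
`n ≥ 3`); a prime set containing `w` contains a factor of each, hence has at least `n²` elements.
-/

theorem Nat.sq_le_sub_one_mul_factorial {n : ℕ} (hn : 3 ≤ n) : n ^ 2 ≤ (n - 1) * n.factorial := by
  obtain ⟨m, rfl⟩ : ∃ m, n = m + 3 := ⟨n - 3, by omega⟩
  have h := Nat.mul_le_mul_left (m + 3)
    (Nat.mul_le_mul_left (m + 2) (Nat.self_le_factorial (m + 2)))
  rw [show m + 3 - 1 = m + 2 from rfl, Nat.factorial_succ]
  nlinarith

section IsPrimeIn

variable {M : Type*} [Mul M]

def IsPrimeIn (A W : Set M) : Prop :=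
  ∀ a ∈ A, ∀ b ∈ A, a * b ∈ W → a ∈ W ∨ b ∈ W

theorem isPrimeIn_sdiff (A : Set M) (T : Subsemigroup M) : IsPrimeIn A (A \ T) := by
  intro a ha b hb hab
  by_contra! h
  have haT : a ∈ T := by simpa [ha] using h.1
  have hbT : b ∈ T := by simpa [hb] using h.2
  exact hab.2 (mul_mem haT hbT)

def IsPrimeIn.sdiffSubsemigroup {A : Subsemigroup M} {W : Set M} (hW : IsPrimeIn A W) :
    Subsemigroup M where
  carrier := (A : Set M) \ W
  mul_mem' {a b} ha hb :=
    ⟨mul_mem ha.1 hb.1, fun hab => (hW a ha.1 b hb.1 hab).elim ha.2 hb.2⟩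

theorem IsPrimeIn.card_le_ncard {A W : Set M} (hW : IsPrimeIn A W) (hWfin : W.Finite) {w : M}
    (hw : w ∈ W) {X : Type*} {a b : X → M} (ha : ∀ x, a x ∈ A) (hb : ∀ x, b x ∈ A)
    (hab : ∀ x, a x * b x = w) (ha_inj : a.Injective) (hb_inj : b.Injective)
    (hab_eq : ∀ x y, a x = b y → x = y) : Nat.card X ≤ W.ncard := by
  classical
  have := hWfin.to_subtype
  let f : X → W := fun x =>
    if hx : a x ∈ W then ⟨a x, hx⟩
    else ⟨b x, (hW _ (ha x) _ (hb x) ((hab x).symm ▸ hw)).resolve_left hx⟩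
  have hf : f.Injective := by
    intro x y hxy
    have hxy' := congrArg Subtype.val hxy
    simp only [f] at hxy'
    split_ifs at hxy'
    · exact ha_inj hxy'
    · exact hab_eq x y hxy'
    · exact (hab_eq y x hxy'.symm).symm
    · exact hb_inj hxy'
  simpa [Nat.card_coe_set_eq] using Nat.card_le_card_of_injective f hf

theorem sInf_ncard_generating_eq {A : Subsemigroup M} (hA : (A : Set M).Finite) {m : ℕ}
    (hmin : ∀ W ⊆ (A : Set M), W.Nonempty → IsPrimeIn A W → m ≤ W.ncard)
    {V : Set M} (hVA : V ⊆ A) (hVne : V.Nonempty) (hVprime : IsPrimeIn A V) (hV : V.ncard = m) :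
    sInf {k | ∀ U : Set M, U ⊆ A → U.ncard = k → (Subsemigroup.closure U : Set M) = A} =
      (A : Set M).ncard - m + 1 := by
  have hm_pos : 0 < m := hV ▸ (Set.ncard_pos (hA.subset hVA)).mpr hVne
  have hm_le : m ≤ (A : Set M).ncard := hV ▸ Set.ncard_le_ncard hVA hA
  refine IsLeast.csInf_eq ⟨fun U hUA hU => ?_, fun k hk => ?_⟩
  · have hle : Subsemigroup.closure U ≤ A := Subsemigroup.closure_le.mpr hUA
    by_contra hne
    obtain ⟨w, hwA, hw⟩ := Set.exists_of_ssubset (LE.le.ssubset_of_ne hle hne)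
    have h1 := hmin _ Set.sdiff_subset ⟨w, hwA, hw⟩ (isPrimeIn_sdiff A (Subsemigroup.closure U))
    have h2 : ((A : Set M) \ Subsemigroup.closure U).ncard ≤ ((A : Set M) \ U).ncard :=
      Set.ncard_le_ncard (Set.sdiff_subset_sdiff_right Subsemigroup.subset_closure) (hA.sdiff)
    rw [Set.ncard_sdiff hUA (hA.subset hUA), hU] at h2
    omega
  · by_contra! hlt
    obtain ⟨U, hU, hUcard⟩ := Set.exists_subset_card_eq (s := (A : Set M) \ V) (n := k)
      (by rw [Set.ncard_sdiff hVA (hA.subset hVA)]; omega)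
    have hcl : Subsemigroup.closure U ≤ hVprime.sdiffSubsemigroup :=
      Subsemigroup.closure_le.mpr hU
    obtain ⟨v, hv⟩ := hVne
    have hv' : v ∈ (Subsemigroup.closure U : Set M) :=
      (hk U (hU.trans Set.sdiff_subset) hUcard).symm ▸ hVA hv
    exact (hcl hv').2 hv

end IsPrimeIn

instance (n : ℕ) : Finite (Bn n) := inferInstanceAs (Finite (Option (Fin n × Fin n)))

theorem Bn.card_eq (n : ℕ) : Nat.card (Bn n) = n ^ 2 + 1 := by
  rw [show Bn n = Option (Fin n × Fin n) from rfl, Finite.card_option]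
  simp [sq]

namespace MapBn

variable {n : ℕ}

instance : Finite (MapBn n) := inferInstanceAs (Finite (Bn n → Bn n))

theorem constMap_apply (c x : Bn n) : constMap n c x = c := rfl

theorem nSuppMap_none (p q : Fin n) (σ : Equiv.Perm (Fin n)) : nSuppMap n p q σ none = none :=
  rfl

theorem nSuppMap_some (p q : Fin n) (σ : Equiv.Perm (Fin n)) (i j : Fin n) :
    nSuppMap n p q σ (some (i, j)) = if j = p then some (σ i, q) else none := rfl

theorem sglMap_none (k l p q : Fin n) : sglMap n k l p q none = none := rfl

theorem sglMap_some (k l p q i j : Fin n) :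
    sglMap n k l p q (some (i, j)) = if i = k ∧ j = l then some (p, q) else none := by
  by_cases h : i = k ∧ j = l
  · rw [if_pos h, h.1, h.2]
    exact if_pos rfl
  · rw [if_neg h]
    exact if_neg fun h' => h (Prod.mk.inj (Option.some.inj h'))

theorem mul_eq_of_apply {f g h : MapBn n} (h_none : g (f none) = h none)
    (h_some : ∀ i j, g (f (some (i, j))) = h (some (i, j))) : f * g = h := by
  funext x
  rcases x with _ | ⟨i, j⟩
  exacts [h_none, h_some i j]

theorem constMap_mul (c : Bn n) (g : MapBn n) : constMap n c * g = constMap n (g c) := rfl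

theorem nSuppMap_mul_nSuppMap (p r r' q : Fin n) (τ υ : Equiv.Perm (Fin n)) :
    nSuppMap n p r τ * nSuppMap n r' q υ =
      if r = r' then nSuppMap n p q (υ * τ) else constMap n none := by
  split_ifs <;> refine mul_eq_of_apply rfl fun i j => ?_ <;>
    grind [constMap_apply, nSuppMap_some, nSuppMap_none, Equiv.Perm.mul_apply]

theorem nSuppMap_mul_sglMap (c b' : Fin n) (τ : Equiv.Perm (Fin n)) (a b p q : Fin n) :
    nSuppMap n c b' τ * sglMap n a b p q =
      if b' = b then sglMap n (τ.symm a) c p q else constMap n none := by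
  split_ifs <;> refine mul_eq_of_apply rfl fun i j => ?_ <;>
    grind [constMap_apply, nSuppMap_some, sglMap_some, sglMap_none, Equiv.eq_symm_apply]

theorem sglMap_mul_nSuppMap (k l p q p' q' : Fin n) (σ : Equiv.Perm (Fin n)) :
    sglMap n k l p q * nSuppMap n p' q' σ =
      if q = p' then sglMap n k l (σ p) q' else constMap n none := by
  split_ifs <;> refine mul_eq_of_apply rfl fun i j => ?_ <;>
    grind [constMap_apply, nSuppMap_some, nSuppMap_none, sglMap_some]

theorem sglMap_mul_sglMap (k l a b k' l' p q : Fin n) :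
    sglMap n k l a b * sglMap n k' l' p q =
      if a = k' ∧ b = l' then sglMap n k l p q else constMap n none := by
  split_ifs <;> refine mul_eq_of_apply rfl fun i j => ?_ <;>
    grind [constMap_apply, sglMap_some, sglMap_none]

theorem constMap_injective : Function.Injective (constMap n) := fun _ _ h => congrFun h none

theorem nSuppMap_inj {p q p' q' : Fin n} {σ σ' : Equiv.Perm (Fin n)}
    (h : nSuppMap n p q σ = nSuppMap n p' q' σ') : p = p' ∧ q = q' ∧ σ = σ' := by
  have key : ∀ i, nSuppMap n p q σ (some (i, p)) = nSuppMap n p' q' σ' (some (i, p)) :=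
    fun i => congrFun h _
  simp only [nSuppMap_some, if_true] at key
  have hp : p = p' := by
    by_contra hp
    simpa [hp] using key p
  subst hp
  simp only [if_true] at key
  have key' : ∀ i, σ i = σ' i ∧ q = q' := fun i => Prod.mk.inj (Option.some.inj (key i))
  exact ⟨rfl, (key' p).2, Equiv.ext fun i => (key' i).1⟩

theorem sglMap_inj {k l p q k' l' p' q' : Fin n}
    (h : sglMap n k l p q = sglMap n k' l' p' q') : k = k' ∧ l = l' ∧ p = p' ∧ q = q' := by
  have key : sglMap n k l p q (some (k, l)) = sglMap n k' l' p' q' (some (k, l)) := congrFun h _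
  simp only [sglMap_some] at key
  grind

theorem constMap_ne_nSuppMap (c : Bn n) (p q : Fin n) (σ : Equiv.Perm (Fin n)) :
    constMap n c ≠ nSuppMap n p q σ := fun h => by
  have h_none : c = none := congrFun h none
  have h_some : c = some (σ p, q) := (congrFun h (some (p, p))).trans (if_pos rfl)
  simp [h_none] at h_some

theorem constMap_ne_sglMap (c : Bn n) (k l p q : Fin n) : constMap n c ≠ sglMap n k l p q :=
  fun h => by
  have h_none : c = none := congrFun h none
  have h_some : c = some (p, q) := (congrFun h (some (k, l))).trans (if_pos rfl)
  simp [h_none] at h_some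

/-- An `n`-support map is nonzero at `n ≥ 2` points. -/
theorem nSuppMap_ne_sglMap (hn : 2 ≤ n) (p q : Fin n) (σ : Equiv.Perm (Fin n))
    (k l p' q' : Fin n) : nSuppMap n p q σ ≠ sglMap n k l p' q' := fun h => by
  have := Fin.nontrivial_iff_two_le.mpr hn
  obtain ⟨i, hi⟩ := exists_ne k
  have key : nSuppMap n p q σ (some (i, p)) = sglMap n k l p' q' (some (i, p)) := congrFun h _
  simp [nSuppMap_some, sglMap_some, hi] at key

end MapBn

namespace APlus

open MapBn

variable {n : ℕ}

theorem constMap_mem (c : Bn n) : constMap n c ∈ APlus n := Or.inl ⟨c, rfl⟩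

theorem nSuppMap_mem (p q : Fin n) (σ : Equiv.Perm (Fin n)) : nSuppMap n p q σ ∈ APlus n :=
  Or.inr (Or.inl ⟨p, q, σ, rfl⟩)

theorem sglMap_mem (k l p q : Fin n) : sglMap n k l p q ∈ APlus n :=
  Or.inr (Or.inr ⟨k, l, p, q, rfl⟩)

theorem mul_mem {a b : MapBn n} (ha : a ∈ APlus n) (hb : b ∈ APlus n) : a * b ∈ APlus n := by
  rcases hb with ⟨c, rfl⟩ | ⟨p', q', σ', rfl⟩ | ⟨k', l', p', q', rfl⟩
  · exact constMap_mem c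
  all_goals
    rcases ha with ⟨c, rfl⟩ | ⟨p, q, σ, rfl⟩ | ⟨k, l, p, q, rfl⟩
    · rw [constMap_mul]
      exact constMap_mem _
    all_goals
      simp only [nSuppMap_mul_nSuppMap, nSuppMap_mul_sglMap, sglMap_mul_nSuppMap,
        sglMap_mul_sglMap]
      split_ifs
      all_goals first | exact constMap_mem _ | exact nSuppMap_mem .. | exact sglMap_mem ..

def subsemigroup (n : ℕ) : Subsemigroup (MapBn n) where
  carrier := APlus n
  mul_mem' := mul_mem

theorem coe_subsemigroup (n : ℕ) : (subsemigroup n : Set (MapBn n)) = APlus n := rfl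

theorem eq_constMap_or_apply_none {f : MapBn n} (hf : f ∈ APlus n) :
    f = constMap n (f none) ∨ f none = none := by
  rcases hf with ⟨c, rfl⟩ | ⟨p, q, σ, rfl⟩ | ⟨k, l, p, q, rfl⟩
  exacts [Or.inl rfl, Or.inr rfl, Or.inr rfl]

def param (n : ℕ) :
    Bn n ⊕ ((Fin n × Fin n) × Equiv.Perm (Fin n)) ⊕ ((Fin n × Fin n) × (Fin n × Fin n)) →
      MapBn n :=
  Sum.elim (constMap n) <| Sum.elim (fun x => nSuppMap n x.1.1 x.1.2 x.2)
    (fun x => sglMap n x.1.1 x.1.2 x.2.1 x.2.2)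

theorem range_param : Set.range (param n) = APlus n := by
  ext f
  simp only [param, Set.Sum.elim_range, Set.mem_union, Set.mem_range, Prod.exists, APlus,
    Set.mem_ofPred_eq]
  grind

theorem param_injective (hn : 2 ≤ n) : Function.Injective (param n) := by
  refine constMap_injective.sumElim (Function.Injective.sumElim ?_ ?_ ?_) ?_
  · rintro ⟨⟨p, q⟩, σ⟩ ⟨⟨p', q'⟩, σ'⟩ h
    obtain ⟨rfl, rfl, rfl⟩ := nSuppMap_inj h
    rfl
  · rintro ⟨⟨k, l⟩, ⟨p, q⟩⟩ ⟨⟨k', l'⟩, ⟨p', q'⟩⟩ h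
    obtain ⟨rfl, rfl, rfl, rfl⟩ := sglMap_inj h
    rfl
  · exact fun _ _ => nSuppMap_ne_sglMap hn _ _ _ _ _ _ _
  · rintro c (⟨⟨p, q⟩, σ⟩ | ⟨⟨k, l⟩, ⟨p, q⟩⟩)
    exacts [constMap_ne_nSuppMap c p q σ, constMap_ne_sglMap c k l p q]

theorem ncard_eq (hn : 2 ≤ n) : (APlus n).ncard = (n.factorial + 1) * n ^ 2 + n ^ 4 + 1 := by
  rw [← range_param, Set.ncard_range_of_injective (param_injective hn)]
  simp only [Nat.card_sum, Nat.card_prod, Bn.card_eq, Nat.card_perm, Nat.card_fin]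
  ring

def nonzeroConsts (n : ℕ) : Set (MapBn n) := {f | ∃ i j : Fin n, f = constMap n (some (i, j))}

theorem nonzeroConsts_subset : nonzeroConsts n ⊆ APlus n := by
  rintro _ ⟨i, j, rfl⟩
  exact constMap_mem _

theorem nonzeroConsts_nonempty (hn : 0 < n) : (nonzeroConsts n).Nonempty :=
  ⟨_, ⟨⟨0, hn⟩, ⟨0, hn⟩, rfl⟩⟩

theorem ncard_nonzeroConsts : (nonzeroConsts n).ncard = n ^ 2 := by
  have : nonzeroConsts n = Set.range fun x : Fin n × Fin n => constMap n (some x) := by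
    ext f
    simp [nonzeroConsts, eq_comm]
  rw [this,
    Set.ncard_range_of_injective fun x y h => Option.some_injective _ (constMap_injective h)]
  simp [sq]

theorem isPrimeIn_nonzeroConsts : IsPrimeIn (APlus n) (nonzeroConsts n) := by
  rintro a ha b hb ⟨i, j, hab⟩
  have hθ : b (a none) = some (i, j) := congrFun hab none
  rcases eq_constMap_or_apply_none hb with hb' | hb'
  · refine Or.inr ⟨i, j, ?_⟩
    rw [hb'] at hab ⊢
    exact hab
  · refine Or.inl ?_
    rcases ha' : a none with _ | ⟨k, l⟩
    · rw [ha', hb'] at hθ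
      exact absurd hθ (Option.some_ne_none _).symm
    · exact ⟨k, l, ha' ▸ (eq_constMap_or_apply_none ha).resolve_right (by simp [ha'])⟩

variable {W : Set (MapBn n)}

theorem sq_le_ncard_of_constMap_none_mem (hW : IsPrimeIn (APlus n) W) (hn : 2 ≤ n)
    (hw : constMap n none ∈ W) : n ^ 2 ≤ W.ncard := by
  have := Fin.nontrivial_iff_two_le.mpr hn
  choose g hg using fun k : Fin n => exists_ne k
  let s : Fin n × Fin n → MapBn n := fun x => sglMap n x.1 x.2 (g x.1) x.2
  have hs : s.Injective := fun x y h => Prod.ext (sglMap_inj h).1 (sglMap_inj h).2.1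
  have hsq : ∀ x, s x * s x = constMap n none := fun x => by simp [s, sglMap_mul_sglMap, hg]
  simpa [sq] using hW.card_le_ncard (Set.toFinite W) hw (fun _ => sglMap_mem ..)
    (fun _ => sglMap_mem ..) hsq hs hs fun _ _ h => hs h

theorem sq_le_ncard_of_constMap_some_mem (hW : IsPrimeIn (APlus n) W) {i j : Fin n}
    (hw : constMap n (some (i, j)) ∈ W) : n ^ 2 ≤ W.ncard := by
  have hab : ∀ x : Fin n × Fin n, constMap n (some x) * sglMap n x.1 x.2 i j =
      constMap n (some (i, j)) := fun ⟨k, l⟩ =>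
    congrArg (constMap n) ((sglMap_some k l i j k l).trans (if_pos ⟨rfl, rfl⟩))
  simpa [sq] using hW.card_le_ncard (Set.toFinite W) hw (fun _ => constMap_mem _)
    (fun _ => sglMap_mem ..) hab (fun x y h => Option.some_injective _ (constMap_injective h))
    (fun x y h => Prod.ext (sglMap_inj h).1 (sglMap_inj h).2.1)
    fun _ _ h => (constMap_ne_sglMap _ _ _ _ _ h).elim

/-- `(p, q; σ) = (p, r; τ) (r, q; στ⁻¹)` for all `τ ∈ Sₙ` and `r ≠ q`; the condition `r ≠ q` keeps
the left factors apart from the right ones. -/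
theorem sq_le_ncard_of_nSuppMap_mem (hW : IsPrimeIn (APlus n) W) (hn : 3 ≤ n)
    {p q : Fin n} {σ : Equiv.Perm (Fin n)} (hw : nSuppMap n p q σ ∈ W) : n ^ 2 ≤ W.ncard := by
  let a : {r // r ≠ q} × Equiv.Perm (Fin n) → MapBn n := fun x => nSuppMap n p x.1 x.2
  let b : {r // r ≠ q} × Equiv.Perm (Fin n) → MapBn n := fun x => nSuppMap n x.1 q (σ * x.2⁻¹)
  have hab : ∀ x, a x * b x = nSuppMap n p q σ := fun x => by
    simp only [a, b, nSuppMap_mul_nSuppMap, if_pos, inv_mul_cancel_right]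
  have ha : a.Injective := fun x y h => by
    obtain ⟨-, hr, hτ⟩ := nSuppMap_inj h
    exact Prod.ext (Subtype.ext hr) hτ
  have hb : b.Injective := fun x y h => by
    obtain ⟨hr, -, hτ⟩ := nSuppMap_inj h
    exact Prod.ext (Subtype.ext hr) (inv_injective (mul_left_cancel hτ))
  have hcard : Nat.card ({r // r ≠ q} × Equiv.Perm (Fin n)) = (n - 1) * n.factorial := by
    simp [Nat.card_eq_fintype_card, Fintype.card_subtype_compl, Fintype.card_perm]
  calc n ^ 2 ≤ (n - 1) * n.factorial := Nat.sq_le_sub_one_mul_factorial hn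
    _ = Nat.card ({r // r ≠ q} × Equiv.Perm (Fin n)) := hcard.symm
    _ ≤ W.ncard := hW.card_le_ncard (Set.toFinite W) hw (fun _ => nSuppMap_mem ..)
        (fun _ => nSuppMap_mem ..) hab ha hb fun x _ h => absurd (nSuppMap_inj h).2.1 x.1.2

/-- `((k, l) → (p, q)) = (l, d; (k c)) ((c, d) → (p, q))` for all `c, d`, where `(k c)` is a
transposition. -/
theorem sq_le_ncard_of_sglMap_mem (hW : IsPrimeIn (APlus n) W) (hn : 2 ≤ n)
    {k l p q : Fin n} (hw : sglMap n k l p q ∈ W) : n ^ 2 ≤ W.ncard := by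
  let a : Fin n × Fin n → MapBn n := fun x => nSuppMap n l x.2 (Equiv.swap k x.1)
  let b : Fin n × Fin n → MapBn n := fun x => sglMap n x.1 x.2 p q
  have hab : ∀ x, a x * b x = sglMap n k l p q := fun x => by
    simp only [a, b, nSuppMap_mul_sglMap, if_pos, Equiv.symm_swap, Equiv.swap_apply_right]
  have ha : a.Injective := fun x y h => by
    obtain ⟨-, hd, hσ⟩ := nSuppMap_inj h
    refine Prod.ext ?_ hd
    simpa using congrArg (· k) hσ
  have hb : b.Injective := fun x y h => Prod.ext (sglMap_inj h).1 (sglMap_inj h).2.1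
  simpa [sq] using hW.card_le_ncard (Set.toFinite W) hw (fun _ => nSuppMap_mem ..)
    (fun _ => sglMap_mem ..) hab ha hb fun _ _ h => (nSuppMap_ne_sglMap hn _ _ _ _ _ _ _ h).elim

theorem sq_le_ncard_of_isPrimeIn (hn : 3 ≤ n) (hWA : W ⊆ APlus n) (hne : W.Nonempty)
    (hW : IsPrimeIn (APlus n) W) : n ^ 2 ≤ W.ncard := by
  obtain ⟨w, hw⟩ := hne
  rcases hWA hw with ⟨_ | ⟨i, j⟩, rfl⟩ | ⟨p, q, σ, rfl⟩ | ⟨k, l, p, q, rfl⟩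
  · exact sq_le_ncard_of_constMap_none_mem hW (by omega) hw
  · exact sq_le_ncard_of_constMap_some_mem hW hw
  · exact sq_le_ncard_of_nSuppMap_mem hW hn hw
  · exact sq_le_ncard_of_sglMap_mem hW (by omega) hw

end APlus

open APlus in
theorem large_rank_APlus_general (n : ℕ) (hn : 3 ≤ n) :
    let V : Set (MapBn n) := {f | ∃ i j : Fin n, f = constMap n (some (i, j))}
    sInf {k | ∀ U : Set (MapBn n), U ⊆ APlus n → U.ncard = k →
        (Subsemigroup.closure U : Set (MapBn n)) = APlus n} =
      n.factorial * n ^ 2 + n ^ 4 + 2 ∧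
    (V ⊆ APlus n ∧ V.Nonempty ∧
      (∀ a ∈ APlus n, ∀ b ∈ APlus n, a * b ∈ V → a ∈ V ∨ b ∈ V) ∧
      (∀ W ⊆ APlus n, W.Nonempty →
        (∀ a ∈ APlus n, ∀ b ∈ APlus n, a * b ∈ W → a ∈ W ∨ b ∈ W) →
        V.ncard ≤ W.ncard) ∧
      V.ncard = n ^ 2) ∧
    (APlus n).ncard = (n.factorial + 1) * n ^ 2 + n ^ 4 + 1 := by
  have hmin : ∀ W ⊆ APlus n, W.Nonempty → IsPrimeIn (APlus n) W →
      (nonzeroConsts n).ncard ≤ W.ncard :=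
    fun W hWA hne hW => ncard_nonzeroConsts.trans_le (sq_le_ncard_of_isPrimeIn hn hWA hne hW)
  have hcard := ncard_eq (n := n) (by omega)
  have hrank := sInf_ncard_generating_eq (A := subsemigroup n) (Set.toFinite _) hmin
    nonzeroConsts_subset (nonzeroConsts_nonempty (by omega)) isPrimeIn_nonzeroConsts rfl
  refine ⟨?_, ⟨nonzeroConsts_subset, nonzeroConsts_nonempty (by omega), isPrimeIn_nonzeroConsts,
    hmin, ncard_nonzeroConsts⟩, hcard⟩
  rw [coe_subsemigroup] at hrank
  rw [hrank, hcard, ncard_nonzeroConsts, add_mul, one_mul]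
  omega

theorem large_rank_APlus (n : ℕ) [NeZero n] (hn : 3 ≤ n) :
    let V : Set (MapBn n) := {f | ∃ i j : Fin n, f = constMap n (some (i, j))}
    sInf {k | ∀ U : Set (MapBn n), U ⊆ APlus n → U.ncard = k →
        (Subsemigroup.closure U : Set (MapBn n)) = APlus n} =
      n.factorial * n ^ 2 + n ^ 4 + 2 ∧
    (V ⊆ APlus n ∧ V.Nonempty ∧
      (∀ a ∈ APlus n, ∀ b ∈ APlus n, a * b ∈ V → a ∈ V ∨ b ∈ V) ∧
      (∀ W ⊆ APlus n, W.Nonempty →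
        (∀ a ∈ APlus n, ∀ b ∈ APlus n, a * b ∈ W → a ∈ W ∨ b ∈ W) →
        V.ncard ≤ W.ncard) ∧
      V.ncard = n ^ 2) ∧
    (APlus n).ncard = (n.factorial + 1) * n ^ 2 + n ^ 4 + 1 :=
  large_rank_APlus_general n hn
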